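/- Let k ≥ 1 and let φ, φ' be Boolean functions on V = {0,...,k}. Then eul(φ) = eul(φ') if and only if φ ≃ φ'. (In other words, the equivalence classes of ≃ correspond exactly to the possible values of the Euler characteristic.) -/

import Mathlib

/-
Each move adds or removes two adjacent valuations, whose signs `(-1)^|ν|` are opposite, so the
Euler characteristic is invariant. Conversely, think of `sat(φ)` as tokens on the hypercube.
Two adjacent tokens cancel, and a token can jump two steps over an empty vertex (add one
adjacent pair, remove another). Walking a token towards a token of the opposite parity until
something cancels shows that every configuration is equivalent to one whose tokens all have the
same parity. Such a configuration can never shrink, since there `|eul|` is the number of tokens;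
hence walking its tokens one by one onto those of another such configuration with the same Euler
characteristic never cancels anything and ends in that configuration.
-/

open scoped Classical

/-- Flip the membership of variable `l` in valuation `ν`. -/
def flipV {k : ℕ} (ν : Finset (Fin (k + 1))) (l : Fin (k + 1)) : Finset (Fin (k + 1)) :=
  if l ∈ ν then ν.erase l else insert l ν

/-- The set of satisfying valuations of a Boolean function on `V = {0,...,k}`. -/
def satSet {k : ℕ} (φ : Finset (Fin (k + 1)) → Bool) : Finset (Finset (Fin (k + 1))) :=
  Finset.univ.filter (fun ν => φ ν = true)

/-- The Euler characteristic of a Boolean function: `Σ_{ν ⊨ φ} (-1)^{|ν|}`. -/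
def eul {k : ℕ} (φ : Finset (Fin (k + 1)) → Bool) : ℤ :=
  ∑ ν ∈ satSet φ, (-1 : ℤ) ^ ν.card

/-- `φ →+ φ'`: there are `ν, l` with `ν ∉ sat(φ)`, `ν^(l) ∉ sat(φ)` and
`sat(φ') = sat(φ) ∪ {ν, ν^(l)}`. -/
def StepPlus (k : ℕ) (φ φ' : Finset (Fin (k + 1)) → Bool) : Prop :=
  ∃ (ν : Finset (Fin (k + 1))) (l : Fin (k + 1)),
    φ ν = false ∧ φ (flipV ν l) = false ∧
    ∀ μ, (φ' μ = true ↔ φ μ = true ∨ μ = ν ∨ μ = flipV ν l)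

/-- `φ →− φ'`: remove two adjacent satisfying valuations. -/
def StepMinus (k : ℕ) (φ φ' : Finset (Fin (k + 1)) → Bool) : Prop :=
  StepPlus k φ' φ

/-- `φ →± φ'`. -/
def StepPM (k : ℕ) (φ φ' : Finset (Fin (k + 1)) → Bool) : Prop :=
  StepPlus k φ φ' ∨ StepMinus k φ φ'

/-- The relation `≃` (equivalently `→±*`): the reflexive transitive closure of `→±`. -/
def EquivPM (k : ℕ) (φ φ' : Finset (Fin (k + 1)) → Bool) : Prop :=
  Relation.ReflTransGen (StepPM k) φ φ'

theorem neg_one_pow_eq_neg_iff_ne (m n : ℕ) :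
    (-1 : ℤ) ^ m = -(-1) ^ n ↔ (-1 : ℤ) ^ m ≠ (-1) ^ n := by
  rcases neg_one_pow_eq_or ℤ m with h | h <;> rcases neg_one_pow_eq_or ℤ n with h' | h' <;>
    simp [h, h']

section Flip

variable {k : ℕ} (ν μ : Finset (Fin (k + 1))) (l : Fin (k + 1))

theorem flipV_eq_symmDiff : flipV ν l = symmDiff ν {l} := by
  ext x
  by_cases hx : x = l <;> by_cases hl : l ∈ ν <;> simp_all [flipV, Finset.mem_symmDiff]

@[simp]
theorem flipV_flipV : flipV (flipV ν l) l = ν := by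
  simp [flipV_eq_symmDiff, symmDiff_symmDiff_cancel_right]

theorem neg_one_pow_card_flipV : (-1 : ℤ) ^ (flipV ν l).card = -(-1) ^ ν.card := by
  have key : ∀ ν : Finset (Fin (k + 1)), l ∉ ν → (-1 : ℤ) ^ (flipV ν l).card = -(-1) ^ ν.card :=
    fun ν hl => by simp [flipV, hl, Finset.card_insert_of_notMem, pow_succ]
  by_cases hl : l ∈ ν
  · have hl' : l ∉ flipV ν l := by simp [flipV, hl]
    simpa using congrArg Neg.neg (key _ hl').symm
  · exact key ν hl

theorem flipV_ne : flipV ν l ≠ ν := fun h => by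
  have := neg_one_pow_card_flipV ν l
  rw [h] at this
  exact (neg_one_pow_eq_neg_iff_ne _ _).1 this rfl

theorem symmDiff_flipV_of_mem {l : Fin (k + 1)} (hl : l ∈ symmDiff ν μ) :
    symmDiff (flipV ν l) μ = (symmDiff ν μ).erase l := by
  ext x
  by_cases hx : x = l <;> simp_all [flipV_eq_symmDiff, Finset.mem_symmDiff]; tauto

theorem flipV_injective : Function.Injective (flipV ν) := fun l m h => by
  simpa [flipV_eq_symmDiff] using h

end Flip

namespace EquivPM

variable {k : ℕ}

theorem eul_eq_of_stepPlus {φ ψ : Finset (Fin (k + 1)) → Bool} (h : StepPlus k φ ψ) :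
    eul ψ = eul φ := by
  obtain ⟨ν, l, hν, hνl, hψ⟩ := h
  have hsat : satSet ψ = insert ν (insert (flipV ν l) (satSet φ)) := by
    ext μ
    simp [satSet, hψ μ]
    tauto
  have hνl' : ν ∉ insert (flipV ν l) (satSet φ) := by
    simp [satSet, hν, (flipV_ne ν l).symm]
  rw [eul, hsat, Finset.sum_insert hνl', Finset.sum_insert (by simp [satSet, hνl]),
    neg_one_pow_card_flipV, eul]
  ring

theorem eul_eq {φ ψ : Finset (Fin (k + 1)) → Bool} (h : EquivPM k φ ψ) : eul φ = eul ψ := by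
  induction h with
  | refl => rfl
  | tail _ hstep ih =>
    rcases hstep with h | h <;> rw [ih, eul_eq_of_stepPlus h]

instance : Std.Symm (StepPM k) := ⟨fun _ _ => Or.symm⟩

theorem symm {φ ψ : Finset (Fin (k + 1)) → Bool} (h : EquivPM k φ ψ) : EquivPM k ψ φ :=
  Std.Symm.symm (r := Relation.ReflTransGen (StepPM k)) _ _ h

theorem trans {φ ψ χ : Finset (Fin (k + 1)) → Bool} (h₁ : EquivPM k φ ψ)
    (h₂ : EquivPM k ψ χ) : EquivPM k φ χ :=
  Relation.ReflTransGen.trans h₁ h₂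

end EquivPM

section Configurations

variable {k : ℕ}

def ofSet (S : Finset (Finset (Fin (k + 1)))) : Finset (Fin (k + 1)) → Bool :=
  fun ν => decide (ν ∈ S)

@[simp]
theorem satSet_ofSet (S : Finset (Finset (Fin (k + 1)))) : satSet (ofSet S) = S := by
  ext ν
  simp [satSet, ofSet]

theorem ofSet_satSet (φ : Finset (Fin (k + 1)) → Bool) : ofSet (satSet φ) = φ := by
  funext ν
  simp [satSet, ofSet]

theorem eul_ofSet (S : Finset (Finset (Fin (k + 1)))) :
    eul (ofSet S) = ∑ ν ∈ S, (-1 : ℤ) ^ ν.card := by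
  rw [eul, satSet_ofSet]

theorem EquivPM.ofSet_insert_insert {S : Finset (Finset (Fin (k + 1)))} {ν} {l}
    (hν : ν ∉ S) (hνl : flipV ν l ∉ S) :
    EquivPM k (ofSet S) (ofSet (insert ν (insert (flipV ν l) S))) :=
  .single <| .inl ⟨ν, l, by simpa [ofSet], by simpa [ofSet], fun μ => by simp [ofSet]; tauto⟩

theorem EquivPM.ofSet_erase_erase {S : Finset (Finset (Fin (k + 1)))} {ν} {l}
    (hν : ν ∈ S) (hνl : flipV ν l ∈ S) :
    EquivPM k (ofSet S) (ofSet ((S.erase ν).erase (flipV ν l))) := by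
  have hS : insert ν (insert (flipV ν l) ((S.erase ν).erase (flipV ν l))) = S := by
    rw [Finset.insert_erase (Finset.mem_erase.2 ⟨flipV_ne ν l, hνl⟩), Finset.insert_erase hν]
  refine .symm ?_
  conv_rhs => rw [← hS]
  exact ofSet_insert_insert (by simp) (by simp)

theorem EquivPM.ofSet_jump {S : Finset (Finset (Fin (k + 1)))} {ν α β} {l m}
    (hνα : flipV ν l = α) (hαβ : flipV α m = β)
    (hν : ν ∈ S) (hα : α ∉ S) (hβ : β ∉ S) (hβν : β ≠ ν) :
    EquivPM k (ofSet S) (ofSet (insert β (S.erase ν))) := by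
  -- add the pair `{α, β}`, then remove the pair `{α, ν}`
  have hαβS : α ∉ insert β S := by simpa [hα] using hαβ ▸ (flipV_ne α m).symm
  have hαν : flipV α l = ν := hνα ▸ flipV_flipV ν l
  have hT : ((insert α (insert β S)).erase α).erase (flipV α l) = insert β (S.erase ν) := by
    rw [Finset.erase_insert hαβS, hαν, Finset.erase_insert_of_ne hβν]
  rw [← hT]
  exact (hαβ ▸ ofSet_insert_insert hα (hαβ ▸ hβ)).trans
    (ofSet_erase_erase (by simp) (by simp [hαν, hν]))

end Configurations

section Shrink

variable {k : ℕ}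

def CanShrink (S : Finset (Finset (Fin (k + 1)))) : Prop :=
  ∃ T : Finset (Finset (Fin (k + 1))), EquivPM k (ofSet S) (ofSet T) ∧ T.card < S.card

theorem CanShrink.of_equivPM {S T : Finset (Finset (Fin (k + 1)))}
    (hST : EquivPM k (ofSet S) (ofSet T)) (hcard : T.card = S.card) (hT : CanShrink T) :
    CanShrink S :=
  let ⟨U, hTU, hU⟩ := hT
  ⟨U, hST.trans hTU, hcard ▸ hU⟩

theorem canShrink_of_mem_of_flipV_mem {S : Finset (Finset (Fin (k + 1)))} {ν} {l}
    (hν : ν ∈ S) (hνl : flipV ν l ∈ S) : CanShrink S :=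
  ⟨_, .ofSet_erase_erase hν hνl,
    Finset.card_erase_le.trans_lt (Finset.card_erase_lt_of_mem hν)⟩

theorem move_or_canShrink {S : Finset (Finset (Fin (k + 1)))} {ν β : Finset (Fin (k + 1))}
    (hν : ν ∈ S) (hβ : β ∉ S.erase ν) (hsign : (-1 : ℤ) ^ β.card = (-1) ^ ν.card) :
    EquivPM k (ofSet S) (ofSet (insert β (S.erase ν))) ∨ CanShrink S := by
  by_cases hνβ : ν = β
  · subst hνβ
    rw [Finset.insert_erase hν]
    exact .inl .refl
  have hβS : β ∉ S := by simpa [Ne.symm hνβ] using hβ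
  obtain ⟨l, hl⟩ : (symmDiff ν β).Nonempty := by
    simpa [Finset.nonempty_iff_ne_empty] using hνβ
  obtain ⟨α, hνα⟩ : ∃ α, flipV ν l = α := ⟨_, rfl⟩
  by_cases hαS : α ∈ S
  · exact .inr (canShrink_of_mem_of_flipV_mem hν (hνα ▸ hαS))
  have hαβ : α ≠ β := fun h => by
    have := neg_one_pow_card_flipV ν l
    rw [hνα, h, hsign] at this
    exact (neg_one_pow_eq_neg_iff_ne _ _).1 this rfl
  obtain ⟨m, hm⟩ : (symmDiff α β).Nonempty := by
    simpa [Finset.nonempty_iff_ne_empty] using hαβ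
  obtain ⟨γ, hαγ⟩ : ∃ γ, flipV α m = γ := ⟨_, rfl⟩
  have hαβ_dist : symmDiff α β = (symmDiff ν β).erase l := hνα ▸ symmDiff_flipV_of_mem _ _ hl
  have hγν : γ ≠ ν := fun h => by
    have hml : m = l := flipV_injective α ((hαγ.trans h).trans (hνα ▸ flipV_flipV ν l).symm)
    rw [hαβ_dist, hml] at hm
    exact Finset.notMem_erase l _ hm
  have hγsign : (-1 : ℤ) ^ β.card = (-1) ^ γ.card := by
    rw [hsign, ← hαγ, neg_one_pow_card_flipV, ← hνα, neg_one_pow_card_flipV, neg_neg]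
  have hdist : (symmDiff γ β).card < (symmDiff ν β).card := by
    rw [← hαγ, symmDiff_flipV_of_mem _ _ hm, hαβ_dist]
    exact Finset.card_erase_le.trans_lt (Finset.card_erase_lt_of_mem hl)
  by_cases hγS : γ ∈ S
  · -- move the token at `γ` on to `β` first, then jump from `ν` to the vacated `γ`
    refine (move_or_canShrink hγS (by simp [hβS]) hγsign).imp (fun h => ?_) id
    have hγβ : γ ≠ β := fun h => hβS (h ▸ hγS)
    have hT : insert γ ((insert β (S.erase γ)).erase ν) = insert β (S.erase ν) := by
      ext x
      by_cases hx : x = γ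
      · subst hx; simp [hγS, hγν]
      · rcases eq_or_ne x β with rfl | hxβ <;> simp [*, Ne.symm hνβ]
    rw [← hT]
    exact h.trans (.ofSet_jump hνα hαγ (by simp [hν, hγν.symm])
      (by simp [hαS, hαβ]) (by simp [hγβ]) hγν)
  · -- jump from `ν` to `γ` first, then move the token on to `β`
    have hjump := EquivPM.ofSet_jump hνα hαγ hν hαS hγS hγν
    have hT : (insert γ (S.erase ν)).erase γ = S.erase ν := by simp [hγS]
    refine (move_or_canShrink (Finset.mem_insert_self γ (S.erase ν)) (by rwa [hT]) hγsign).imp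
      (fun h => hjump.trans (by rwa [hT] at h)) (CanShrink.of_equivPM hjump ?_)
    rw [Finset.card_insert_of_notMem (by simp [hγS]), Finset.card_erase_add_one hν]
termination_by (symmDiff ν β).card

end Shrink

section Normalize

variable {k : ℕ}

def UniformParity (S : Finset (Finset (Fin (k + 1)))) (ρ : Finset (Fin (k + 1))) : Prop :=
  ∀ ν ∈ S, (-1 : ℤ) ^ ν.card = (-1) ^ ρ.card

theorem canShrink_of_neg_one_pow_card_ne {S : Finset (Finset (Fin (k + 1)))} {ν μ}
    (hν : ν ∈ S) (hμ : μ ∈ S) (hsign : (-1 : ℤ) ^ ν.card ≠ (-1) ^ μ.card) : CanShrink S := by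
  -- a neighbour of `μ` has the sign of `ν`: bring the token at `ν` there and cancel it with `μ`
  obtain ⟨μ', hμμ'⟩ : ∃ μ', flipV μ 0 = μ' := ⟨_, rfl⟩
  by_cases hμ'S : μ' ∈ S
  · exact canShrink_of_mem_of_flipV_mem hμ (hμμ' ▸ hμ'S)
  have hsign' : (-1 : ℤ) ^ μ'.card = (-1) ^ ν.card := by
    rw [← hμμ', neg_one_pow_card_flipV, eq_comm, neg_one_pow_eq_neg_iff_ne]
    exact hsign
  refine (move_or_canShrink hν (by simp [hμ'S]) hsign').elim (fun h => ?_) id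
  refine .of_equivPM h ?_ (canShrink_of_mem_of_flipV_mem (ν := μ) (l := 0) ?_ ?_)
  · rw [Finset.card_insert_of_notMem (by simp [hμ'S]), Finset.card_erase_add_one hν]
  · exact Finset.mem_insert_of_mem (Finset.mem_erase.2 ⟨fun h => hsign (h ▸ rfl), hμ⟩)
  · simp [hμμ']

theorem eul_ofSet_of_uniformParity {S : Finset (Finset (Fin (k + 1)))}
    {ρ : Finset (Fin (k + 1))} (hS : UniformParity S ρ) :
    eul (ofSet S) = (-1) ^ ρ.card * S.card := by
  rw [eul_ofSet, Finset.sum_congr rfl hS, Finset.sum_const, nsmul_eq_mul, mul_comm]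

theorem abs_eul_ofSet_le (S : Finset (Finset (Fin (k + 1)))) : |eul (ofSet S)| ≤ S.card := by
  rw [eul_ofSet]
  exact (Finset.abs_sum_le_sum_abs _ _).trans (by simp)

theorem not_canShrink_of_uniformParity {S : Finset (Finset (Fin (k + 1)))}
    {ρ : Finset (Fin (k + 1))} (hS : UniformParity S ρ) : ¬CanShrink S := by
  rintro ⟨T, hST, hcard⟩
  have h := abs_eul_ofSet_le T
  rw [← hST.eul_eq, eul_ofSet_of_uniformParity hS, abs_mul, abs_neg_one_pow, one_mul,
    Nat.abs_cast] at h
  exact absurd h (by exact_mod_cast hcard.not_ge)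

theorem exists_equivPM_uniformParity (S : Finset (Finset (Fin (k + 1)))) :
    ∃ (T : Finset (Finset (Fin (k + 1)))) (ρ : Finset (Fin (k + 1))),
      EquivPM k (ofSet S) (ofSet T) ∧ UniformParity T ρ := by
  by_cases hmixed : ∃ ν ∈ S, ∃ μ ∈ S, (-1 : ℤ) ^ ν.card ≠ (-1) ^ μ.card
  · obtain ⟨ν, hν, μ, hμ, hsign⟩ := hmixed
    obtain ⟨T, hST, hcard⟩ := canShrink_of_neg_one_pow_card_ne hν hμ hsign
    obtain ⟨U, ρ, hTU, hU⟩ := exists_equivPM_uniformParity T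
    exact ⟨U, ρ, hST.trans hTU, hU⟩
  · push Not at hmixed
    rcases S.eq_empty_or_nonempty with rfl | ⟨ρ, hρ⟩
    · exact ⟨∅, ∅, .refl, by simp [UniformParity]⟩
    · exact ⟨S, ρ, .refl, fun ν hν => hmixed ν hν ρ hρ⟩
termination_by S.card

theorem EquivPM.ofSet_of_uniformParity_of_card_eq {S T : Finset (Finset (Fin (k + 1)))}
    {ρ : Finset (Fin (k + 1))} (hS : UniformParity S ρ) (hT : UniformParity T ρ)
    (hcard : S.card = T.card) :
    EquivPM k (ofSet S) (ofSet T) := by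
  by_cases hST : S ⊆ T
  · rw [Finset.eq_of_subset_of_card_le hST hcard.ge]
    exact .refl
  obtain ⟨ν, hνS, hνT⟩ := Finset.not_subset.1 hST
  obtain ⟨β, hβT, hβS⟩ := Finset.not_subset.1 fun hTS : T ⊆ S =>
    hνT (Finset.eq_of_subset_of_card_le hTS hcard.le ▸ hνS)
  set S' := insert β (S.erase ν)
  have hSS' : EquivPM k (ofSet S) (ofSet S') :=
    (move_or_canShrink hνS (by simp [hβS]) ((hT β hβT).trans (hS ν hνS).symm)).resolve_right
      (not_canShrink_of_uniformParity hS)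
  have hS' : UniformParity S' ρ := by
    intro μ hμ
    rcases Finset.mem_insert.1 hμ with rfl | hμ
    exacts [hT μ hβT, hS μ (Finset.mem_of_mem_erase hμ)]
  have hcard' : S'.card = T.card := by
    rw [Finset.card_insert_of_notMem (by simp [hβS]), Finset.card_erase_add_one hνS, hcard]
  have hdiff : S' \ T = (S \ T).erase ν := by
    ext μ
    by_cases hμ : μ = β <;> simp [S', hμ, hβT, and_assoc]
  have : (S' \ T).card < (S \ T).card := by
    rw [hdiff]
    exact Finset.card_erase_lt_of_mem (Finset.mem_sdiff.2 ⟨hνS, hνT⟩)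
  exact hSS'.trans (ofSet_of_uniformParity_of_card_eq hS' hT hcard')
termination_by (S \ T).card

end Normalize

theorem EquivPM.ofSet_of_uniformParity_of_eul_eq {k : ℕ} {S T : Finset (Finset (Fin (k + 1)))}
    {ρ ρ' : Finset (Fin (k + 1))} (hS : UniformParity S ρ) (hT : UniformParity T ρ')
    (h : eul (ofSet S) = eul (ofSet T)) :
    EquivPM k (ofSet S) (ofSet T) := by
  rw [eul_ofSet_of_uniformParity hS, eul_ofSet_of_uniformParity hT] at h
  by_cases hρ : (-1 : ℤ) ^ ρ'.card = (-1) ^ ρ.card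
  · rw [hρ] at h
    exact ofSet_of_uniformParity_of_card_eq hS (fun ν hν => (hT ν hν).trans hρ)
      (by simpa using h)
  · have hST : S.card = 0 ∧ T.card = 0 := by
      rcases neg_one_pow_eq_or ℤ ρ.card with h₁ | h₁ <;>
        rcases neg_one_pow_eq_or ℤ ρ'.card with h₂ | h₂ <;> simp_all
    rw [Finset.card_eq_zero.1 hST.1, Finset.card_eq_zero.1 hST.2]
    exact .refl

theorem stmt11_general (k : ℕ) (φ φ' : Finset (Fin (k + 1)) → Bool) :
    eul φ = eul φ' ↔ EquivPM k φ φ' := by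
  refine ⟨fun h => ?_, EquivPM.eul_eq⟩
  rw [← ofSet_satSet φ, ← ofSet_satSet φ'] at h ⊢
  obtain ⟨S, ρ, hφS, hS⟩ := exists_equivPM_uniformParity (satSet φ)
  obtain ⟨T, ρ', hφT, hT⟩ := exists_equivPM_uniformParity (satSet φ')
  rw [hφS.eul_eq, hφT.eul_eq] at h
  exact hφS.trans ((EquivPM.ofSet_of_uniformParity_of_eul_eq hS hT h).trans hφT.symm)

/-- `eul(φ) = eul(φ')` if and only if `φ ≃ φ'`. -/
theorem stmt11 (k : ℕ) (hk : 1 ≤ k) (φ φ' : Finset (Fin (k + 1)) → Bool) :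
    eul φ = eul φ' ↔ EquivPM k φ φ' :=
  stmt11_general k φ φ'
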